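/- arXiv:2207.02355 — 3 statements merged into one kernel-verified Lean document; each statement's English description precedes it below -/
import Mathlib

section
/- Soundness of the atomic-command rule: if ⟦c⟧(p) ⊆ q, then safe^k_{{q}, inter(p,c)}(c, p, q) holds for every k ∈ ℕ. -/
open Classical

/-- A separation algebra: a partial commutative monoid with a set of units.
The partial binary operation is modeled as an `Option`-valued function;
`op a b = some c` means the composition is defined and equals `c`. -/
structure SepAlg (α : Type) : Type where
  op : α → α → Option α
  emp : Set α
  comm : ∀ a b : α, op a b = op b a
  assoc : ∀ a b c : α,
    (op a b).bind (fun x => op x c) = (op b c).bind (fun y => op a y)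
  unit_exists : ∀ a : α, ∃ u ∈ emp, op a u = some a
  unit_undef : ∀ u u' : α, u ∈ emp → u' ∈ emp → u ≠ u' → op u u' = none

/-- Separating conjunction of predicates. -/
def SepAlg.sepConj {α : Type} (A : SepAlg α) (p q : Set α) : Set α :=
  { s | ∃ a ∈ p, ∃ b ∈ q, A.op a b = some s }

/-- Separating implication of predicates: `p -* q = { s | {s} * p ⊆ q }`. -/
def SepAlg.sepImp {α : Type} (A : SepAlg α) (p q : Set α) : Set α :=
  { s | ∀ a ∈ p, ∀ t : α, A.op s a = some t → t ∈ q }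

/-- Lifting of a command semantics to predicates (post-image). -/
def postP {β : Type} (f : β → Set β) (p : Set β) : Set β :=
  { t | ∃ s ∈ p, t ∈ f s }

/-- Locality of a command semantics with respect to a separation algebra. -/
def IsLocalCmd {α : Type} (A : SepAlg α) (f : α → Set α) : Prop :=
  ∀ p q o : Set α, postP f p ⊆ q → postP f (A.sepConj p o) ⊆ A.sepConj q o

/-- Weakest precondition. -/
def wpre {α : Type} (f : α → Set α) (q : Set α) : Set α := { s | f s ⊆ q }

/-- The future predicate `⟨p⟩ c ⟨q⟩ := p -* wp(c)(q)`. -/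
def fut {α : Type} (A : SepAlg α) (f : α → Set α) (p q : Set α) : Set α :=
  A.sepImp p (wpre f q)

/-- Statements of the while-language. -/
inductive Stmt (C : Type) : Type where
  | com : C → Stmt C
  | choice : Stmt C → Stmt C → Stmt C
  | seq : Stmt C → Stmt C → Stmt C
  | loop : Stmt C → Stmt C

/-- The control-flow relation `S →^c S'`. -/
inductive CtrlStep {C : Type} (skipc : C) : Stmt C → C → Stmt C → Prop where
  | com (c : C) : CtrlStep skipc (Stmt.com c) c (Stmt.com skipc)
  | seqSkip (S : Stmt C) : CtrlStep skipc (Stmt.seq (Stmt.com skipc) S) skipc S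
  | loopStep (S : Stmt C) :
      CtrlStep skipc (Stmt.loop S) skipc
        (Stmt.choice (Stmt.com skipc) (Stmt.seq S (Stmt.loop S)))
  | choiceL (S₁ S₂ : Stmt C) : CtrlStep skipc (Stmt.choice S₁ S₂) skipc S₁
  | choiceR (S₁ S₂ : Stmt C) : CtrlStep skipc (Stmt.choice S₁ S₂) skipc S₂
  | seqStep {S₁ : Stmt C} {c : C} {S₁' : Stmt C} (S₂ : Stmt C) :
      CtrlStep skipc S₁ c S₁' → CtrlStep skipc (Stmt.seq S₁ S₂) c (Stmt.seq S₁' S₂)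

/-- The state space `Σ`, a subset of the product of global and local states. -/
abbrev PSt {G L : Type} (S : Set (G × L)) : Type := { p : G × L // p ∈ S }

/-- Componentwise composition of states, defined only when both components are
defined and the result again lies in the state space `S`. -/
noncomputable def pOp {G L : Type} (A : SepAlg G) (B : SepAlg L) {S : Set (G × L)}
    (x y : PSt S) : Option (PSt S) :=
  match A.op x.1.1 y.1.1, B.op x.1.2 y.1.2 with
  | some g, some l => if h : (g, l) ∈ S then some ⟨(g, l), h⟩ else none
  | _, _ => none

/-- Separating conjunction of state predicates over the product state space. -/
noncomputable def pSep {G L : Type} (A : SepAlg G) (B : SepAlg L) {S : Set (G × L)}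
    (p q : Set (PSt S)) : Set (PSt S) :=
  { s | ∃ a ∈ p, ∃ b ∈ q, pOp A B a b = some s }

/-- Locality of a command semantics. -/
noncomputable def LocalSem {G L C : Type} (A : SepAlg G) (B : SepAlg L) {S : Set (G × L)}
    (sem : C → PSt S → Set (PSt S)) : Prop :=
  ∀ (c : C) (p q o : Set (PSt S)),
    postP (sem c) p ⊆ q → postP (sem c) (pSep A B p o) ⊆ pSep A B q o

/-- An interference `(o, c)` is effectful if it may change the global state. -/
def Effectful {G L C : Type} {S : Set (G × L)} (sem : C → PSt S → Set (PSt S))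
    (o : Set (PSt S)) (c : C) : Prop :=
  ∃ s ∈ o, ∃ t ∈ sem c s, t.1.1 ≠ s.1.1

/-- `inter(o, c)`: the recorded interference set of a command. -/
def interOf {G L C : Type} {S : Set (G × L)} (sem : C → PSt S → Set (PSt S))
    (o : Set (PSt S)) (c : C) : Set (Set (PSt S) × C) :=
  { x | Effectful sem o c ∧ x = (o, c) }

/-- `inter(o, c) ⊑ 𝕀`: either there is no interference to capture, or it is
covered by an interference in `𝕀`. -/
def InterCovered {G L C : Type} {S : Set (G × L)} (sem : C → PSt S → Set (PSt S))
    (o : Set (PSt S)) (c : C) (I : Set (Set (PSt S) × C)) : Prop :=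
  ¬ Effectful sem o c ∨ ∃ r : Set (PSt S), (r, c) ∈ I ∧ o ⊆ r

/-- Thread-local safety, by recursion on the step bound `k`. -/
def safe {G L C : Type} {S : Set (G × L)} (sem : C → PSt S → Set (PSt S)) (skipc : C)
    (P : Set (Set (PSt S))) (I : Set (Set (PSt S) × C)) :
    ℕ → Stmt C → Set (PSt S) → Set (PSt S) → Prop
  | 0, _, _, _ => True
  | k + 1, St, r, q =>
      (St = Stmt.com skipc → r ⊆ q) ∧
      ∀ (c : C) (S' : Stmt C), CtrlStep skipc St c S' →
        InterCovered sem r c I ∧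
        ∃ n ∈ P, postP (sem c) r ⊆ n ∧ safe sem skipc P I k S' n q

theorem postP_singleton {β : Type} (p : Set β) : postP (fun s => {s}) p = p := by
  ext t
  simp [postP]

section Skip

variable {G L C : Type} {S : Set (G × L)} {sem : C → PSt S → Set (PSt S)} {skipc : C}

theorem not_effectful_of_sem_eq_singleton {c : C} (hc : ∀ s : PSt S, sem c s = {s})
    (o : Set (PSt S)) : ¬ Effectful sem o c := by
  rintro ⟨s, -, t, ht, hne⟩
  rw [hc, Set.mem_singleton_iff] at ht
  exact hne (congrArg (fun x : PSt S => x.1.1) ht)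

theorem safe_skip (hskip : ∀ s : PSt S, sem skipc s = {s}) {P : Set (Set (PSt S))}
    {q : Set (PSt S)} (hq : q ∈ P) (I : Set (Set (PSt S) × C)) (k : ℕ) :
    safe sem skipc P I k (Stmt.com skipc) q q := by
  have hpost : postP (sem skipc) q = q := by
    rw [funext hskip, postP_singleton]
  induction k with
  | zero => trivial
  | succ k ih =>
    refine ⟨fun _ => subset_rfl, fun c S' hstep => ?_⟩
    cases hstep
    exact ⟨Or.inl (not_effectful_of_sem_eq_singleton hskip q), q, hq, hpost.subset, ih⟩

end Skip

theorem interCovered_interOf {G L C : Type} {S : Set (G × L)} (sem : C → PSt S → Set (PSt S))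
    (o : Set (PSt S)) (c : C) : InterCovered sem o c (interOf sem o c) := by
  by_cases he : Effectful sem o c
  · exact Or.inr ⟨o, ⟨he, rfl⟩, subset_rfl⟩
  · exact Or.inl he

/-- soundness of the atomic-command rule. -/
theorem stmt14 {G L C : Type} {S : Set (G × L)} (sem : C → PSt S → Set (PSt S))
    (skipc : C) (hskip : ∀ s : PSt S, sem skipc s = {s})
    (c : C) (p q : Set (PSt S)) (h : postP (sem c) p ⊆ q) (k : ℕ) :
    safe sem skipc {q} (interOf sem p c) k (Stmt.com c) p q := by
  cases k with
  | zero => trivial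
  | succ k =>
    refine ⟨fun hc => ?_, fun c' S' hstep => ?_⟩
    · obtain rfl := Stmt.com.inj hc
      rwa [funext hskip, postP_singleton] at h
    · cases hstep
      exact ⟨interCovered_interOf sem p c, q, rfl, h, safe_skip hskip (Set.mem_singleton q) _ k⟩
end

section
/- Soundness of the frame rule with respect to safety: assume all command semantics are local. If safe^k_{ℙ,𝕀}(S, r, q), then safe^k_{ℙ*o, 𝕀*o}(S, r*o, q*o) for every predicate o ⊆ Σ, where ℙ*o := { n*o | n ∈ ℙ } and 𝕀*o := { (r'*o, c) | (r', c) ∈ 𝕀 }. -/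
open Classical

/-!
Induction on the step bound. Post-conditions and the terminal condition are framed by
locality and monotonicity of `*`; the one point needing care is that framing cannot make a
non-effectful step effectful, because by locality a step from `a * b` is a step from `a`
composed with the untouched frame `b`, and `a`'s step leaves the global state unchanged.
-/

section Frame

variable {G L C : Type} {A : SepAlg G} {B : SepAlg L} {S : Set (G × L)}

lemma op_fst_of_pOp_eq_some {a b s : PSt S} (h : pOp A B a b = some s) :
    A.op a.1.1 b.1.1 = some s.1.1 := by
  unfold pOp at h
  split at h
  next g l hg _ =>
    split at h
    · cases h
      exact hg
    · cases h
  next => cases h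

lemma pSep_mono_left {p q : Set (PSt S)} (o : Set (PSt S)) (h : p ⊆ q) :
    pSep A B p o ⊆ pSep A B q o := by
  rintro s ⟨a, ha, b, hb, hab⟩
  exact ⟨a, h ha, b, hb, hab⟩

variable {sem : C → PSt S → Set (PSt S)}

/-- Locality for the singletons `{a}` and `{b}`. -/
lemma LocalSem.exists_frame (hloc : LocalSem A B sem) (c : C) {a b s t : PSt S}
    (hab : pOp A B a b = some s) (ht : t ∈ sem c s) :
    ∃ t₁ ∈ sem c a, pOp A B t₁ b = some t := by
  obtain ⟨t₁, ⟨a', rfl, ht₁⟩, b', rfl, ht₁b⟩ :=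
    hloc c {a} (postP (sem c) {a}) {b} subset_rfl ⟨s, ⟨a, rfl, b, rfl, hab⟩, ht⟩
  exact ⟨t₁, ht₁, ht₁b⟩

lemma LocalSem.not_effectful_pSep (hloc : LocalSem A B sem) {c : C} {r : Set (PSt S)}
    (o : Set (PSt S)) (hr : ¬ Effectful sem r c) : ¬ Effectful sem (pSep A B r o) c := by
  rintro ⟨s, ⟨a, ha, b, -, hab⟩, t, ht, hts⟩
  obtain ⟨t₁, ht₁, ht₁b⟩ := hloc.exists_frame c hab ht
  have hglobal : t₁.1.1 = a.1.1 := by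
    by_contra hne
    exact hr ⟨a, ha, t₁, ht₁, hne⟩
  have hsome : A.op a.1.1 b.1.1 = some t.1.1 := hglobal ▸ op_fst_of_pOp_eq_some ht₁b
  rw [op_fst_of_pOp_eq_some hab] at hsome
  exact hts (Option.some_injective _ hsome).symm

lemma LocalSem.interCovered_pSep (hloc : LocalSem A B sem) {c : C} {r : Set (PSt S)}
    {I : Set (Set (PSt S) × C)} (o : Set (PSt S)) (h : InterCovered sem r c I) :
    InterCovered sem (pSep A B r o) c ((fun x => (pSep A B x.1 o, x.2)) '' I) := by
  rcases h with hr | ⟨r', hr'I, hrr'⟩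
  · exact Or.inl (hloc.not_effectful_pSep o hr)
  · exact Or.inr ⟨pSep A B r' o, ⟨(r', c), hr'I, rfl⟩, pSep_mono_left o hrr'⟩

end Frame

theorem stmt17_general {G L C : Type} (A : SepAlg G) (B : SepAlg L) {S : Set (G × L)}
    (sem : C → PSt S → Set (PSt S)) (skipc : C)
    (hloc : LocalSem A B sem)
    (P : Set (Set (PSt S))) (I : Set (Set (PSt S) × C))
    (k : ℕ) (St : Stmt C) (r q o : Set (PSt S))
    (h : safe sem skipc P I k St r q) :
    safe sem skipc ((fun n => pSep A B n o) '' P)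
      ((fun x => (pSep A B x.1 o, x.2)) '' I) k St (pSep A B r o) (pSep A B q o) := by
  induction k generalizing St r with
  | zero => trivial
  | succ k ih =>
    obtain ⟨hterm, hstep⟩ := h
    refine ⟨fun hskip => pSep_mono_left o (hterm hskip), fun c S' hcS' => ?_⟩
    obtain ⟨hcov, n, hnP, hpost, hsafe⟩ := hstep c S' hcS'
    exact ⟨hloc.interCovered_pSep o hcov, pSep A B n o, ⟨n, hnP, rfl⟩,
      hloc c r n o hpost, ih S' n hsafe⟩

/-- soundness of the frame rule with respect to safety,
assuming all command semantics are local. -/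
theorem stmt17 {G L C : Type} (A : SepAlg G) (B : SepAlg L) {S : Set (G × L)}
    (hemp : ∀ g ∈ A.emp, ∀ l ∈ B.emp, (g, l) ∈ S)
    (hdec : ∀ (g₁ g₂ : G) (l₁ l₂ : L) (g : G) (l : L),
      A.op g₁ g₂ = some g → B.op l₁ l₂ = some l → (g, l) ∈ S → (g₁, l₁) ∈ S)
    (sem : C → PSt S → Set (PSt S)) (skipc : C)
    (hskip : ∀ s : PSt S, sem skipc s = {s})
    (hloc : LocalSem A B sem)
    (P : Set (Set (PSt S))) (I : Set (Set (PSt S) × C))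
    (k : ℕ) (St : Stmt C) (r q o : Set (PSt S))
    (h : safe sem skipc P I k St r q) :
    safe sem skipc ((fun n => pSep A B n o) '' P)
      ((fun x => (pSep A B x.1 o, x.2)) '' I) k St (pSep A B r o) (pSep A B q o) :=
  stmt17_general A B sem skipc hloc P I k St r q o h
end

section
/- If the command semantics ⟦c⟧ is local, then for all predicates o, p ⊆ Σ: if the interference (o * p, c) is effectful, then the interference (o, c) is effectful. -/
open Classical

/-
A local command acts on a composite state `a * b` through `a` alone: locality applied to the
singleton precondition `{a}`, with postcondition its image and frame `{b}`, decomposes each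
outcome as `a' * b` with `a'` an outcome of `a`. Since `b` keeps its global component and
composition is functional, an effect on `a * b` is an effect on `a`.
-/

lemma op_fst_of_pOp_eq_some_s18 {G L : Type} (A : SepAlg G) (B : SepAlg L)
    {S : Set (G × L)} {x y z : PSt S} (h : pOp A B x y = some z) :
    A.op x.1.1 y.1.1 = some z.1.1 := by
  unfold pOp at h
  split at h
  · next hg _ =>
    split_ifs at h
    cases h
    exact hg
  · cases h

lemma exists_mem_pOp_eq_some_of_local {G L : Type} (A : SepAlg G) (B : SepAlg L)
    {S : Set (G × L)} {f : PSt S → Set (PSt S)}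
    (hloc : ∀ p q o : Set (PSt S), postP f p ⊆ q → postP f (pSep A B p o) ⊆ pSep A B q o)
    {a b s t : PSt S} (hab : pOp A B a b = some s) (ht : t ∈ f s) :
    ∃ a' ∈ f a, pOp A B a' b = some t := by
  have hpost : t ∈ postP f (pSep A B {a} {b}) := ⟨s, ⟨a, rfl, b, rfl, hab⟩, ht⟩
  obtain ⟨a', ⟨_, rfl, ha'⟩, _, rfl, ha'b⟩ := hloc {a} (postP f {a}) {b} subset_rfl hpost
  exact ⟨a', ha', ha'b⟩

theorem stmt18_general {G L C : Type} (A : SepAlg G) (B : SepAlg L) {S : Set (G × L)}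
    (sem : C → PSt S → Set (PSt S)) (c : C)
    (hloc : ∀ p q o : Set (PSt S),
      postP (sem c) p ⊆ q → postP (sem c) (pSep A B p o) ⊆ pSep A B q o)
    (o p : Set (PSt S))
    (h : Effectful sem (pSep A B o p) c) :
    Effectful sem o c := by
  obtain ⟨s, ⟨a, ha, b, -, hab⟩, t, ht, hts⟩ := h
  obtain ⟨a', ha', ha'b⟩ := exists_mem_pOp_eq_some_of_local A B hloc hab ht
  refine ⟨a, ha, a', ha', fun hglobal => hts ?_⟩
  have hs := op_fst_of_pOp_eq_some_s18 A B hab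
  have ht' := op_fst_of_pOp_eq_some_s18 A B ha'b
  rw [hglobal, hs] at ht'
  exact (Option.some.inj ht').symm

/-- if `⟦c⟧` is local and `(o * p, c)` is effectful, then
`(o, c)` is effectful. -/
theorem stmt18 {G L C : Type} (A : SepAlg G) (B : SepAlg L) {S : Set (G × L)}
    (hemp : ∀ g ∈ A.emp, ∀ l ∈ B.emp, (g, l) ∈ S)
    (hdec : ∀ (g₁ g₂ : G) (l₁ l₂ : L) (g : G) (l : L),
      A.op g₁ g₂ = some g → B.op l₁ l₂ = some l → (g, l) ∈ S → (g₁, l₁) ∈ S)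
    (sem : C → PSt S → Set (PSt S)) (c : C)
    (hloc : ∀ p q o : Set (PSt S),
      postP (sem c) p ⊆ q → postP (sem c) (pSep A B p o) ⊆ pSep A B q o)
    (o p : Set (PSt S))
    (h : Effectful sem (pSep A B o p) c) :
    Effectful sem o c :=
  stmt18_general A B sem c hloc o p h
end
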